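/- arXiv:2306.04929 — 5 statements merged into one kernel-verified Lean document; each statement's English description precedes it below -/
import Mathlib

section
/- Let A, B : ℝ → ℝ be twice continuously differentiable, let tₙ ∈ ℝ, let q : ℝ → ℝ satisfy q′(t) = A(q(t)) + B(q(t)) for all t, and let q_A : ℝ → ℝ satisfy q_A′(s) = A(q_A(s)) for all s with q_A(0) = q(tₙ) and be twice continuously differentiable near 0. Then the parallel-splitting local truncation error attributable to process A, lte_A^{PS}(Δt) = ∫₀^{Δt} A(q_A(η)) dη − ∫₀^{Δt} A(q(tₙ+η)) dη, satisfies lte_A^{PS}(Δt) = −(Δt²/2)·A′(q(tₙ))·B(q(tₙ)) + O(Δt³) as Δt → 0. -/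
/-!
Put `f η = A (qA η) - A (q (tn + η))`, so that the error is `∫₀^Δt f`. A solution of `y' = F y`
is one degree smoother than `F`, hence `q` and `qA` are `C²` and so is `f`, with `f 0 = 0` and
`f' 0 = A'(c) A(c) - A'(c) (A(c) + B(c)) = -A'(c) B(c)` for `c = q tn`. The claim is then the
second-order Taylor expansion of `Δt ↦ ∫₀^Δt f`, whose remainder is bounded by applying twice the
mean value estimate `g' = O((x - x₀)ⁿ) ⟹ g - g x₀ = O((x - x₀)ⁿ⁺¹)`.
-/

open Filter Asymptotics Topology

section

variable {E : Type*} [NormedAddCommGroup E] [NormedSpace ℝ E]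

theorem contDiff_succ_of_hasDerivAt_comp {F : E → E} {y : ℝ → E} {n : ℕ} (hF : ContDiff ℝ n F)
    (hy : ∀ t, HasDerivAt y (F (y t)) t) : ContDiff ℝ (n + 1) y := by
  have hdiff : Differentiable ℝ y := fun t => (hy t).differentiableAt
  have hderiv : deriv y = F ∘ y := funext fun t => (hy t).deriv
  induction n with
  | zero => exact contDiff_one_iff_deriv.2 ⟨hdiff, hderiv ▸ hF.continuous.comp hdiff.continuous⟩
  | succ k ih =>
    refine contDiff_succ_iff_deriv.2 ⟨hdiff, by simp, hderiv ▸ hF.comp (ih (hF.of_le ?_))⟩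
    exact_mod_cast k.le_succ

theorem isBigO_sub_pow_succ_of_hasDerivAt {f f' : ℝ → E} {x₀ : ℝ} {n : ℕ}
    (hff' : ∀ᶠ x in 𝓝 x₀, HasDerivAt f (f' x) x) (hf' : f' =O[𝓝 x₀] fun x => (x - x₀) ^ n) :
    (fun x => f x - f x₀) =O[𝓝 x₀] fun x => (x - x₀) ^ (n + 1) := by
  obtain ⟨C, hC0, hC⟩ := hf'.exists_nonneg
  obtain ⟨ε, hε, hball⟩ := Metric.eventually_nhds_iff_ball.1 (hff'.and hC.bound)
  refine IsBigO.of_bound C (Metric.eventually_nhds_iff_ball.2 ⟨ε, hε, fun x hx => ?_⟩)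
  have hsub : Metric.closedBall x₀ (dist x x₀) ⊆ Metric.ball x₀ ε :=
    Metric.closedBall_subset_ball hx
  have hbound : ∀ y ∈ Metric.closedBall x₀ (dist x x₀), ‖f' y‖ ≤ C * |x - x₀| ^ n := by
    intro y hy
    calc ‖f' y‖ ≤ C * ‖(y - x₀) ^ n‖ := (hball y (hsub hy)).2
      _ ≤ C * |x - x₀| ^ n := by
        rw [norm_pow, Real.norm_eq_abs]
        exact mul_le_mul_of_nonneg_left
          (pow_le_pow_left₀ (abs_nonneg _) (by simpa [Real.dist_eq] using hy) n) hC0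
  calc ‖f x - f x₀‖ ≤ C * |x - x₀| ^ n * ‖x - x₀‖ :=
        (convex_closedBall x₀ (dist x x₀)).norm_image_sub_le_of_norm_hasDerivWithin_le
          (fun y hy => (hball y (hsub hy)).1.hasDerivWithinAt) hbound
          (Metric.mem_closedBall_self dist_nonneg) (Metric.mem_closedBall.2 le_rfl)
    _ = C * ‖(x - x₀) ^ (n + 1)‖ := by rw [norm_pow, Real.norm_eq_abs, pow_succ, mul_assoc]

theorem ContDiff.isBigO_sub_sub_smul_deriv {f : ℝ → E} (hf : ContDiff ℝ 2 f) (x₀ : ℝ) :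
    (fun x => f x - f x₀ - (x - x₀) • deriv f x₀) =O[𝓝 x₀] fun x => (x - x₀) ^ 2 := by
  have hderiv : ∀ x, HasDerivAt (fun x => f x - (x - x₀) • deriv f x₀)
      (deriv f x - deriv f x₀) x := fun x =>
    ((hf.differentiable (by norm_num) x).hasDerivAt.sub
      (((hasDerivAt_id x).sub_const x₀).smul_const (deriv f x₀))).congr_deriv (by simp)
  have hO : (fun x => deriv f x - deriv f x₀) =O[𝓝 x₀] fun x => (x - x₀) ^ 1 := by
    simpa using (hf.differentiable_deriv_two x₀).isBigO_sub
  simpa [sub_right_comm] using isBigO_sub_pow_succ_of_hasDerivAt (Eventually.of_forall hderiv) hO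

theorem ContDiff.isBigO_integral_sub_taylor [CompleteSpace E] {f : ℝ → E} (hf : ContDiff ℝ 2 f)
    (a : ℝ) :
    (fun x => (∫ t in a..x, f t) - (x - a) • f a - ((x - a) ^ 2 / 2) • deriv f a)
      =O[𝓝 a] fun x => (x - a) ^ 3 := by
  have hderiv : ∀ x, HasDerivAt
      (fun x => (∫ t in a..x, f t) - (x - a) • f a - ((x - a) ^ 2 / 2) • deriv f a)
      (f x - f a - (x - a) • deriv f a) x := fun x => by
    have hsq : HasDerivAt (fun x => (x - a) ^ 2 / 2) (x - a) x :=
      ((((hasDerivAt_id x).sub_const a).pow 2).div_const 2).congr_deriv (by simp)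
    exact (((hf.continuous.integral_hasStrictDerivAt a x).hasDerivAt.sub
      (((hasDerivAt_id x).sub_const a).smul_const (f a))).sub
        (hsq.smul_const (deriv f a))).congr_deriv (by simp)
  simpa using isBigO_sub_pow_succ_of_hasDerivAt (Eventually.of_forall hderiv)
    (hf.isBigO_sub_sub_smul_deriv a)

end

theorem lte_A_parallel_splitting_general
    (A B q qA : ℝ → ℝ) (tn : ℝ)
    (hA : ContDiff ℝ 2 A) (hB : ContDiff ℝ 2 B)
    (hq : ∀ t, HasDerivAt q (A (q t) + B (q t)) t)
    (hqA : ∀ s, HasDerivAt qA (A (qA s)) s)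
    (hqA0 : qA 0 = q tn) :
    (fun Δt : ℝ =>
        ((∫ η in (0:ℝ)..Δt, A (qA η)) - ∫ η in (0:ℝ)..Δt, A (q (tn + η)))
          - (-(Δt ^ 2 / 2) * (deriv A (q tn) * B (q tn))))
      =O[nhds (0:ℝ)] (fun Δt : ℝ => Δt ^ 3) := by
  have hq2 : ContDiff ℝ 2 q :=
    contDiff_succ_of_hasDerivAt_comp (n := 1) ((hA.add hB).of_le one_le_two) hq
  have hqA2 : ContDiff ℝ 2 qA :=
    contDiff_succ_of_hasDerivAt_comp (n := 1) (hA.of_le one_le_two) hqA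
  have hqshift : ContDiff ℝ 2 (fun η => q (tn + η)) := hq2.comp (contDiff_const.add contDiff_id)
  set f : ℝ → ℝ := fun η => A (qA η) - A (q (tn + η))
  have hf : ContDiff ℝ 2 f := (hA.comp hqA2).sub (hA.comp hqshift)
  have hf0 : f 0 = 0 := by simp [f, hqA0]
  have hA' : ∀ x, HasDerivAt A (deriv A x) x :=
    fun x => (hA.differentiable (by norm_num) x).hasDerivAt
  have hf'0 : deriv f 0 = -(deriv A (q tn) * B (q tn)) := by
    have hqA' : HasDerivAt (fun η => A (qA η)) (deriv A (q tn) * A (q tn)) 0 := by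
      rw [← hqA0]
      exact (hA' (qA 0)).comp 0 (hqA 0)
    have hq' : HasDerivAt (fun η => A (q (tn + η)))
        (deriv A (q tn) * (A (q tn) + B (q tn))) 0 := by
      simpa using ((hA' (q (tn + 0))).comp (tn + 0) (hq (tn + 0))).comp_const_add tn 0
    refine (hqA'.sub hq').deriv.trans ?_
    ring
  have hsplit : ∀ Δt, ∫ η in (0:ℝ)..Δt, f η =
      (∫ η in (0:ℝ)..Δt, A (qA η)) - ∫ η in (0:ℝ)..Δt, A (q (tn + η)) := fun Δt =>
    intervalIntegral.integral_sub ((hA.comp hqA2).continuous.intervalIntegrable _ _)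
      ((hA.comp hqshift).continuous.intervalIntegrable _ _)
  refine (hf.isBigO_integral_sub_taylor 0).congr' (Eventually.of_forall fun Δt => ?_) (by simp)
  simp only [hsplit, hf0, hf'0, smul_eq_mul]
  ring

theorem lte_A_parallel_splitting
    (A B q qA : ℝ → ℝ) (tn : ℝ)
    (hA : ContDiff ℝ 2 A) (hB : ContDiff ℝ 2 B)
    (hq : ∀ t, HasDerivAt q (A (q t) + B (q t)) t)
    (hqA : ∀ s, HasDerivAt qA (A (qA s)) s)
    (hqA0 : qA 0 = q tn)
    (hqAsmooth : ContDiffAt ℝ 2 qA 0) :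
    (fun Δt : ℝ =>
        ((∫ η in (0:ℝ)..Δt, A (qA η)) - ∫ η in (0:ℝ)..Δt, A (q (tn + η)))
          - (-(Δt ^ 2 / 2) * (deriv A (q tn) * B (q tn))))
      =O[nhds (0:ℝ)] (fun Δt : ℝ => Δt ^ 3) :=
  lte_A_parallel_splitting_general A B q qA tn hA hB hq hqA hqA0
end

section
/- Let A, B : ℝ → ℝ be twice continuously differentiable, let tₙ ∈ ℝ, let q : ℝ → ℝ satisfy q′(t) = A(q(t)) + B(q(t)) for all t, and let q_B : ℝ → ℝ satisfy q_B′(s) = B(q_B(s)) for all s with q_B(0) = q(tₙ) and be twice continuously differentiable near 0. Then the parallel-splitting local truncation error attributable to process B, lte_B^{PS}(Δt) = ∫₀^{Δt} B(q_B(η)) dη − ∫₀^{Δt} B(q(tₙ+η)) dη, satisfies lte_B^{PS}(Δt) = −(Δt²/2)·B′(q(tₙ))·A(q(tₙ)) + O(Δt³) as Δt → 0. -/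
/-!
Write `g η = B (q_B η) - B (q (tₙ + η))` for the difference of the two integrands. Then `g 0 = 0`,
and by the chain rule `g′ η = B′(q_B η) B(q_B η) - B′(q (tₙ + η)) (A + B)(q (tₙ + η))`, which is
differentiable at `0` with `g′ 0 = -B′(q tₙ) A(q tₙ)`. Integrating a `O(xⁿ)` derivative twice, by the
mean value inequality, gives `∫₀^Δt g = (Δt² / 2) g′ 0 + O(Δt³)`.
-/

open Filter Asymptotics Metric

section BigOOfDeriv

variable {E : Type*} [NormedAddCommGroup E] [NormedSpace ℝ E]

lemma isBigO_pow_succ_of_hasDerivAt {h d : ℝ → E} {n : ℕ} (h0 : h 0 = 0)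
    (hd : ∀ x, HasDerivAt h (d x) x) (hO : d =O[nhds 0] fun x : ℝ => x ^ n) :
    h =O[nhds 0] fun x : ℝ => x ^ (n + 1) := by
  obtain ⟨C, hC, hCd⟩ := hO.exists_pos
  obtain ⟨ε, hε, hball⟩ := eventually_nhds_iff_ball.1 hCd.bound
  refine IsBigO.of_bound C (eventually_nhds_iff_ball.2 ⟨ε, hε, fun x hx => ?_⟩)
  have hx' : |x| < ε := by simpa using hx
  have hbound : ∀ y ∈ closedBall (0 : ℝ) |x|, ‖d y‖ ≤ C * |x| ^ n := fun y hy => by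
    have hy' : |y| ≤ |x| := by simpa using hy
    calc ‖d y‖ ≤ C * |y| ^ n := by
          simpa using hball y (by simpa using hy'.trans_lt hx')
      _ ≤ C * |x| ^ n := by gcongr
  have hmvt := (convex_closedBall (0 : ℝ) |x|).norm_image_sub_le_of_norm_hasDerivWithin_le
    (fun y _ => (hd y).hasDerivWithinAt) hbound (x := 0) (y := x) (by simp) (by simp)
  rw [h0, sub_zero] at hmvt
  calc ‖h x‖ ≤ C * |x| ^ n * ‖x - 0‖ := hmvt
    _ = C * ‖x ^ (n + 1)‖ := by simp [pow_succ, mul_assoc]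

variable [CompleteSpace E]

lemma integral_sub_isBigO_pow_three {g d : ℝ → E} (hg0 : g 0 = 0)
    (hg : ∀ x, HasDerivAt g (d x) x) (hd : DifferentiableAt ℝ d 0) :
    (fun x : ℝ => (∫ η in (0 : ℝ)..x, g η) - (x ^ 2 / 2) • d 0) =O[nhds 0] fun x => x ^ 3 := by
  have hdO : (fun x => d x - d 0) =O[nhds 0] fun x : ℝ => x ^ 1 := by
    simpa using hd.isBigO_sub
  have hlin : (fun x : ℝ => g x - x • d 0) =O[nhds 0] fun x => x ^ 2 :=
    isBigO_pow_succ_of_hasDerivAt (by simp [hg0])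
      (fun x => ((hg x).sub ((hasDerivAt_id' x).smul_const (d 0))).congr_deriv (by rw [one_smul]))
      hdO
  have hgc : Continuous g := continuous_iff_continuousAt.2 fun x => (hg x).continuousAt
  refine isBigO_pow_succ_of_hasDerivAt (by simp) (fun x => ?_) hlin
  have hsq : HasDerivAt (fun u : ℝ => u ^ 2 / 2) x x := by
    simpa using (hasDerivAt_pow 2 x).div_const 2
  exact (hgc.integral_hasStrictDerivAt 0 x).hasDerivAt.sub (hsq.smul_const (d 0))

end BigOOfDeriv

theorem lte_B_parallel_splitting_general
    (A B q qB : ℝ → ℝ) (tn : ℝ)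
    (hA : ContDiff ℝ 2 A) (hB : ContDiff ℝ 2 B)
    (hq : ∀ t, HasDerivAt q (A (q t) + B (q t)) t)
    (hqB : ∀ s, HasDerivAt qB (B (qB s)) s)
    (hqB0 : qB 0 = q tn) :
    (fun Δt : ℝ =>
        ((∫ η in (0:ℝ)..Δt, B (qB η)) - ∫ η in (0:ℝ)..Δt, B (q (tn + η)))
          - (-(Δt ^ 2 / 2) * (deriv B (q tn) * A (q tn))))
      =O[nhds (0:ℝ)] (fun Δt : ℝ => Δt ^ 3) := by
  have hAd : Differentiable ℝ A := hA.differentiable (by norm_num)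
  have hBd : Differentiable ℝ B := hB.differentiable (by norm_num)
  have hB'd : Differentiable ℝ (deriv B) :=
    (contDiff_succ_iff_deriv (n := 1).1 hB).2.2.differentiable (by norm_num)
  have hqd : Differentiable ℝ q := fun t => (hq t).differentiableAt
  have hqBd : Differentiable ℝ qB := fun s => (hqB s).differentiableAt
  have hg : ∀ η, HasDerivAt (fun s => B (qB s) - B (q (tn + s)))
      (deriv B (qB η) * B (qB η) - deriv B (q (tn + η)) * (A (q (tn + η)) + B (q (tn + η)))) η :=
    fun η => ((hBd _).hasDerivAt.comp η (hqB η)).sub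
      ((hBd _).hasDerivAt.comp η ((hq (tn + η)).comp_const_add tn η))
  have hd : DifferentiableAt ℝ (fun η => deriv B (qB η) * B (qB η)
      - deriv B (q (tn + η)) * (A (q (tn + η)) + B (q (tn + η)))) 0 := by
    fun_prop
  refine (integral_sub_isBigO_pow_three (by simp [hqB0]) hg hd).congr' (.of_forall fun x => ?_)
    (.of_forall fun _ => rfl)
  simp only [smul_eq_mul, add_zero, hqB0]
  have hBqB : Continuous fun η => B (qB η) := hBd.continuous.comp hqBd.continuous
  have hBq : Continuous fun η => B (q (tn + η)) :=
    hBd.continuous.comp (hqd.continuous.comp (continuous_const_add tn))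
  rw [intervalIntegral.integral_sub (hBqB.intervalIntegrable 0 x) (hBq.intervalIntegrable 0 x)]
  ring

theorem lte_B_parallel_splitting
    (A B q qB : ℝ → ℝ) (tn : ℝ)
    (hA : ContDiff ℝ 2 A) (hB : ContDiff ℝ 2 B)
    (hq : ∀ t, HasDerivAt q (A (q t) + B (q t)) t)
    (hqB : ∀ s, HasDerivAt qB (B (qB s)) s)
    (hqB0 : qB 0 = q tn)
    (hqBsmooth : ContDiffAt ℝ 2 qB 0) :
    (fun Δt : ℝ =>
        ((∫ η in (0:ℝ)..Δt, B (qB η)) - ∫ η in (0:ℝ)..Δt, B (q (tn + η)))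
          - (-(Δt ^ 2 / 2) * (deriv B (q tn) * A (q tn))))
      =O[nhds (0:ℝ)] (fun Δt : ℝ => Δt ^ 3) :=
  lte_B_parallel_splitting_general A B q qB tn hA hB hq hqB hqB0
end

section
/- Let A, B : ℝ → ℝ be twice continuously differentiable, let tₙ ∈ ℝ, let q : ℝ → ℝ satisfy q′(t) = A(q(t)) + B(q(t)) for all t. Let q_A : ℝ → ℝ satisfy q_A′(s) = A(q_A(s)) with q_A(0) = q(tₙ), and let q_B : ℝ → ℝ → ℝ be the two-parameter flow of B, i.e., for every initial state φ, the function s ↦ q_B(s, φ) satisfies ∂_s q_B(s, φ) = B(q_B(s, φ)) with q_B(0, φ) = φ, with sufficient smoothness (q_B twice continuously differentiable in both arguments near (0, q(tₙ)), q_A twice continuously differentiable near 0). Then ∫₀^{Δt} B(q_B(η, q_A(Δt))) dη = Δt·B(q(tₙ)) + Δt²·B′(q(tₙ))·A(q(tₙ)) + (Δt²/2)·B′(q(tₙ))·B(q(tₙ)) + O(Δt³) as Δt → 0. -/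
/-!
The integrand `g (η, Δt) = B (q_B(η, q_A(Δt)))` is a `C²` function of `(η, Δt)` near the origin,
so it equals its first-order Taylor polynomial up to `O(‖(η, Δt)‖²)`. On the integration range
`‖(η, Δt)‖ = |Δt|`, hence integrating over an interval of length `|Δt|` leaves an `O(Δt³)` error.
Integrating the Taylor polynomial gives `Δt g(0) + (Δt²/2) ∂₁g(0) + Δt² ∂₂g(0)`, and the chain rule
along the two flows identifies `∂₁g(0) = B'(q(tₙ)) B(q(tₙ))`, `∂₂g(0) = B'(q(tₙ)) A(q(tₙ))`.
-/

open Filter Asymptotics Set Topology intervalIntegral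

section

variable {E F : Type*} [NormedAddCommGroup E] [NormedSpace ℝ E]
  [NormedAddCommGroup F] [NormedSpace ℝ F]

theorem ContDiffAt.isBigO_sub_sub_fderiv {f : E → F} {x₀ : E} (hf : ContDiffAt ℝ 2 f x₀) :
    (fun x => f x - f x₀ - fderiv ℝ f x₀ (x - x₀)) =O[𝓝 x₀] fun x => ‖x - x₀‖ ^ 2 := by
  have hdiff : ∀ᶠ y in 𝓝 x₀, DifferentiableAt ℝ f y :=
    (hf.eventually (by simp)).mono fun y hy => hy.differentiableAt (by norm_num)
  have hlip : (fun y => fderiv ℝ f y - fderiv ℝ f x₀) =O[𝓝 x₀] fun y => y - x₀ :=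
    ((hf.fderiv_right (m := 1) (by norm_num)).differentiableAt one_ne_zero).isBigO_sub
  obtain ⟨C, hC, hCbound⟩ := hlip.exists_pos
  obtain ⟨r, hr, hball⟩ := Metric.eventually_nhds_iff_ball.1 (hdiff.and hCbound.bound)
  refine isBigO_iff.2 ⟨C, ?_⟩
  filter_upwards [Metric.ball_mem_nhds x₀ hr] with x hx
  have hsub : Metric.closedBall x₀ ‖x - x₀‖ ⊆ Metric.ball x₀ r :=
    Metric.closedBall_subset_ball (by rwa [← dist_eq_norm])
  have hmvt := (convex_closedBall x₀ ‖x - x₀‖).norm_image_sub_le_of_norm_fderiv_le'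
    (fun y hy => (hball y (hsub hy)).1)
    (fun y hy => ((hball y (hsub hy)).2).trans
      (mul_le_mul_of_nonneg_left (mem_closedBall_iff_norm.1 hy) hC.le))
    (Metric.mem_closedBall_self (norm_nonneg _)) (mem_closedBall_iff_norm.2 le_rfl)
  calc ‖f x - f x₀ - fderiv ℝ f x₀ (x - x₀)‖ ≤ C * ‖x - x₀‖ * ‖x - x₀‖ := hmvt
    _ = C * ‖‖x - x₀‖ ^ 2‖ := by rw [Real.norm_of_nonneg (by positivity)]; ring

end

section

variable {E : Type*} [NormedAddCommGroup E]

theorem norm_prodMk_of_mem_uIcc {η t : ℝ} (hη : η ∈ uIcc 0 t) : ‖(η, t)‖ = ‖t‖ := by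
  have := abs_sub_left_of_mem_uIcc hη
  simp only [sub_zero] at this
  simp [Prod.norm_def, Real.norm_eq_abs, this]

theorem eventually_forall_uIcc_prodMk {P : ℝ × ℝ → Prop} (h : ∀ᶠ p in 𝓝 0, P p) :
    ∀ᶠ t in 𝓝 (0 : ℝ), ∀ η ∈ uIcc 0 t, P (η, t) := by
  obtain ⟨ε, hε, hP⟩ := Metric.eventually_nhds_iff.1 h
  filter_upwards [Metric.ball_mem_nhds 0 hε] with t ht η hη
  apply hP
  rwa [dist_zero_right, norm_prodMk_of_mem_uIcc hη, ← dist_zero_right]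

theorem eventually_intervalIntegrable_prodMk {g : ℝ × ℝ → E}
    (hg : ∀ᶠ p in 𝓝 0, ContinuousAt g p) :
    ∀ᶠ t in 𝓝 (0 : ℝ), IntervalIntegrable (fun η => g (η, t)) MeasureTheory.volume 0 t := by
  filter_upwards [eventually_forall_uIcc_prodMk hg] with t ht
  refine ContinuousOn.intervalIntegrable fun η hη => ?_
  exact (ContinuousAt.comp (f := fun s : ℝ => (s, t)) (ht η hη) (by fun_prop)).continuousWithinAt

variable [NormedSpace ℝ E]

theorem HasFDerivAt.hasDerivAt_partial_fst {g : ℝ × ℝ → E} {L : ℝ × ℝ →L[ℝ] E} {x y : ℝ}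
    (h : HasFDerivAt g L (x, y)) :
    HasDerivAt (fun s => g (s, y)) (L (1, 0)) x :=
  h.comp_hasDerivAt x ((hasDerivAt_id x).prodMk (hasDerivAt_const x y))

theorem HasFDerivAt.hasDerivAt_partial_snd {g : ℝ × ℝ → E} {L : ℝ × ℝ →L[ℝ] E} {x y : ℝ}
    (h : HasFDerivAt g L (x, y)) :
    HasDerivAt (fun s => g (x, s)) (L (0, 1)) y :=
  h.comp_hasDerivAt y ((hasDerivAt_const y x).prodMk (hasDerivAt_id y))

theorem isBigO_integral_prodMk_of_isBigO_norm_sq {R : ℝ × ℝ → E}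
    (hR : R =O[𝓝 0] fun p => ‖p‖ ^ 2) :
    (fun t : ℝ => ∫ η in 0..t, R (η, t)) =O[𝓝 0] fun t => t ^ 3 := by
  obtain ⟨C, hC⟩ := hR.bound
  refine isBigO_iff.2 ⟨C, ?_⟩
  filter_upwards [eventually_forall_uIcc_prodMk hC] with t ht
  calc ‖∫ η in 0..t, R (η, t)‖ ≤ C * ‖t‖ ^ 2 * |t - 0| :=
        norm_integral_le_of_norm_le_const fun η hη => by
          simpa [norm_prodMk_of_mem_uIcc (uIoc_subset_uIcc hη)] using ht η (uIoc_subset_uIcc hη)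
    _ = C * ‖t ^ 3‖ := by simp only [sub_zero, norm_pow, Real.norm_eq_abs]; ring

variable [CompleteSpace E]

theorem ContinuousLinearMap.integral_apply_prodMk (L : ℝ × ℝ →L[ℝ] E) (t : ℝ) :
    ∫ η in 0..t, L (η, t) = (t ^ 2 / 2) • L (1, 0) + t ^ 2 • L (0, 1) := by
  have hL : ∀ η, L (η, t) = η • L (1, 0) + t • L (0, 1) := fun η => by
    rw [← map_smul, ← map_smul, ← map_add]; simp
  simp_rw [hL]
  rw [integral_add (Continuous.intervalIntegrable (by fun_prop) _ _) intervalIntegrable_const,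
    intervalIntegral.integral_smul_const, integral_const, integral_id, smul_smul]
  congr 1 <;> ring_nf

theorem ContDiffAt.isBigO_integral_prodMk_sub_taylor {g : ℝ × ℝ → E} (hg : ContDiffAt ℝ 2 g 0) :
    (fun t : ℝ => (∫ η in 0..t, g (η, t)) - t • g 0 - (t ^ 2 / 2) • fderiv ℝ g 0 (1, 0)
        - t ^ 2 • fderiv ℝ g 0 (0, 1)) =O[𝓝 0] fun t => t ^ 3 := by
  have hR : (fun p => g p - g 0 - fderiv ℝ g 0 p) =O[𝓝 0] fun p => ‖p‖ ^ 2 := by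
    simpa using hg.isBigO_sub_sub_fderiv
  have hcont : ∀ᶠ p in 𝓝 0, ContinuousAt g p :=
    (hg.eventually (by simp)).mono fun p hp => hp.continuousAt
  refine (isBigO_integral_prodMk_of_isBigO_norm_sq hR).congr' ?_ EventuallyEq.rfl
  filter_upwards [eventually_intervalIntegrable_prodMk hcont] with t ht
  have hlin : IntervalIntegrable (fun η => fderiv ℝ g 0 (η, t)) MeasureTheory.volume 0 t :=
    Continuous.intervalIntegrable (by fun_prop) _ _
  rw [integral_sub (ht.sub intervalIntegrable_const) hlin, integral_sub ht intervalIntegrable_const,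
    integral_const, ContinuousLinearMap.integral_apply_prodMk, sub_zero]
  abel

end

theorem sequential_splitting_B_integral_expansion_general
    (A B q qA : ℝ → ℝ) (qB : ℝ → ℝ → ℝ) (tn : ℝ)
    (hB : ContDiff ℝ 2 B)
    (hqA : ∀ s, HasDerivAt qA (A (qA s)) s)
    (hqA0 : qA 0 = q tn)
    (hqB : ∀ φ s, HasDerivAt (fun u => qB u φ) (B (qB s φ)) s)
    (hqB0 : ∀ φ, qB 0 φ = φ)
    (hqAsmooth : ContDiffAt ℝ 2 qA 0)
    (hqBsmooth : ContDiffAt ℝ 2 (fun p : ℝ × ℝ => qB p.1 p.2) (0, q tn)) :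
    (fun Δt : ℝ =>
        (∫ η in (0:ℝ)..Δt, B (qB η (qA Δt))) - Δt * B (q tn)
          - Δt ^ 2 * (deriv B (q tn) * A (q tn))
          - Δt ^ 2 / 2 * (deriv B (q tn) * B (q tn)))
      =O[nhds (0:ℝ)] (fun Δt : ℝ => Δt ^ 3) := by
  set c := q tn
  set g : ℝ × ℝ → ℝ := fun p => B (qB p.1 (qA p.2))
  have hinner : ContDiffAt ℝ 2 (fun p : ℝ × ℝ => (p.1, qA p.2)) 0 :=
    contDiffAt_fst.prodMk (hqAsmooth.comp (0 : ℝ × ℝ) contDiffAt_snd)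
  have hg : ContDiffAt ℝ 2 g 0 :=
    hB.contDiffAt.comp _ (ContDiffAt.comp (g := fun p : ℝ × ℝ => qB p.1 p.2) _
      (by simpa [hqA0] using hqBsmooth) hinner)
  have hL : HasFDerivAt g (fderiv ℝ g 0) (0, 0) := (hg.differentiableAt two_ne_zero).hasFDerivAt
  have hB' : HasDerivAt B (deriv B c) c := (hB.differentiable two_ne_zero c).hasDerivAt
  have hfst : fderiv ℝ g 0 (1, 0) = deriv B c * B c := by
    refine hL.hasDerivAt_partial_fst.unique ?_
    simp only [g, hqA0]
    have hBc : HasDerivAt B (deriv B c) (qB 0 c) := by rwa [hqB0]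
    exact hBc.comp 0 (by simpa [hqB0] using hqB c 0)
  have hsnd : fderiv ℝ g 0 (0, 1) = deriv B c * A c := by
    refine hL.hasDerivAt_partial_snd.unique ?_
    simp only [g, hqB0]
    have hBc : HasDerivAt B (deriv B c) (qA 0) := by rwa [hqA0]
    exact hBc.comp 0 (by simpa [hqA0] using hqA 0)
  have hg0 : g 0 = B c := by simp [g, hqB0, hqA0, c]
  refine hg.isBigO_integral_prodMk_sub_taylor.congr_left fun t => ?_
  rw [hfst, hsnd, hg0]
  simp only [smul_eq_mul, g]
  ring

theorem sequential_splitting_B_integral_expansion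
    (A B q qA : ℝ → ℝ) (qB : ℝ → ℝ → ℝ) (tn : ℝ)
    (hA : ContDiff ℝ 2 A) (hB : ContDiff ℝ 2 B)
    (hq : ∀ t, HasDerivAt q (A (q t) + B (q t)) t)
    (hqA : ∀ s, HasDerivAt qA (A (qA s)) s)
    (hqA0 : qA 0 = q tn)
    (hqB : ∀ φ s, HasDerivAt (fun u => qB u φ) (B (qB s φ)) s)
    (hqB0 : ∀ φ, qB 0 φ = φ)
    (hqAsmooth : ContDiffAt ℝ 2 qA 0)
    (hqBsmooth : ContDiffAt ℝ 2 (fun p : ℝ × ℝ => qB p.1 p.2) (0, q tn)) :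
    (fun Δt : ℝ =>
        (∫ η in (0:ℝ)..Δt, B (qB η (qA Δt))) - Δt * B (q tn)
          - Δt ^ 2 * (deriv B (q tn) * A (q tn))
          - Δt ^ 2 / 2 * (deriv B (q tn) * B (q tn)))
      =O[nhds (0:ℝ)] (fun Δt : ℝ => Δt ^ 3) :=
  sequential_splitting_B_integral_expansion_general A B q qA qB tn hB hqA hqA0 hqB hqB0 hqAsmooth
    hqBsmooth
end

section
/- Let A, B : ℝ → ℝ be twice continuously differentiable, let tₙ ∈ ℝ, let q : ℝ → ℝ satisfy q′(t) = A(q(t)) + B(q(t)) for all t. Let q_A : ℝ → ℝ satisfy q_A′(s) = A(q_A(s)) with q_A(0) = q(tₙ), and let q_B : ℝ → ℝ → ℝ be the two-parameter flow of B (for every φ, ∂_s q_B(s, φ) = B(q_B(s, φ)) and q_B(0, φ) = φ), with q_A and q_B twice continuously differentiable near 0 and near (0, q(tₙ)) respectively. Then the sequential-splitting local truncation error attributable to process B, lte_B^{SS}(Δt) = ∫₀^{Δt} B(q_B(η, q_A(Δt))) dη − ∫₀^{Δt} B(q(tₙ+η)) dη, satisfies lte_B^{SS}(Δt) = +(Δt²/2)·B′(q(tₙ))·A(q(tₙ))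 + O(Δt³) as Δt → 0. -/
/-! Along a solution of `y' = F y` one has `y'' = F' y * F y`, so the second-order Taylor remainder
of `y` is controlled by a Lipschitz constant of `F' * F` times a bound of `F`; on a compact ball
around `q tₙ` this gives, uniformly in `φ`,
`qB τ φ = φ + τ B φ + τ²/2 B' φ B φ + O(τ³)`.
Substituting `φ = qA τ = q tₙ + τ A + O(τ²)` yields
`∫₀^τ B (qB η (qA τ)) dη = τ B + τ² B' A + τ²/2 B' B + O(τ³)` (all at `q tₙ`), while
`∫₀^τ B (q (tₙ + η)) dη = τ B + τ²/2 B' (A + B) + O(τ³)`; the difference is `τ²/2 B' A`. -/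

open Filter Asymptotics Set Topology NNReal

theorem eventually_forall_uIcc {p : ℝ → Prop} (h : ∀ᶠ u in 𝓝 0, p u) :
    ∀ᶠ s in 𝓝 0, ∀ u ∈ uIcc 0 s, p u := by
  obtain ⟨ε, hε, hp⟩ := Metric.eventually_nhds_iff_ball.mp h
  filter_upwards [Metric.ball_mem_nhds 0 hε] with s hs u hu
  exact hp u ((convex_ball 0 ε).ordConnected.uIcc_subset (Metric.mem_ball_self hε) hs hu)

section Taylor

variable {f f' f'' : ℝ → ℝ} {s C K : ℝ}

theorem abs_sub_le_of_hasDerivAt_uIcc (hf : ∀ u ∈ uIcc 0 s, HasDerivAt f (f' u) u)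
    (hC : ∀ u ∈ uIcc 0 s, |f' u| ≤ C) : |f s - f 0| ≤ C * |s| := by
  simpa using (convex_uIcc 0 s).norm_image_sub_le_of_norm_hasDerivWithin_le
    (fun u hu => (hf u hu).hasDerivWithinAt) hC left_mem_uIcc right_mem_uIcc

theorem abs_taylor1_le (hK0 : 0 ≤ K) (hf : ∀ u ∈ uIcc 0 s, HasDerivAt f (f' u) u)
    (hK : ∀ u ∈ uIcc 0 s, |f' u - f' 0| ≤ K * |u|) :
    |f s - f 0 - s * f' 0| ≤ K * |s| ^ 2 := by
  have hg : ∀ u ∈ uIcc 0 s, HasDerivAt (fun v => f v - v * f' 0) (f' u - f' 0) u := fun u hu =>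
    (hf u hu).sub (hasDerivAt_mul_const (f' 0))
  have hg' : ∀ u ∈ uIcc 0 s, |f' u - f' 0| ≤ K * |s| := fun u hu =>
    (hK u hu).trans (by simpa using mul_le_mul_of_nonneg_left (abs_sub_left_of_mem_uIcc hu) hK0)
  have := abs_sub_le_of_hasDerivAt_uIcc hg hg'
  calc |f s - f 0 - s * f' 0| = |f s - s * f' 0 - (f 0 - 0 * f' 0)| := by ring_nf
    _ ≤ K * |s| * |s| := this
    _ = K * |s| ^ 2 := by ring

theorem abs_taylor2_le (hK0 : 0 ≤ K) (hf : ∀ u ∈ uIcc 0 s, HasDerivAt f (f' u) u)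
    (hf' : ∀ u ∈ uIcc 0 s, HasDerivAt f' (f'' u) u)
    (hK : ∀ u ∈ uIcc 0 s, |f'' u - f'' 0| ≤ K * |u|) :
    |f s - f 0 - s * f' 0 - s ^ 2 / 2 * f'' 0| ≤ K * |s| ^ 3 := by
  have hg : ∀ u ∈ uIcc 0 s, HasDerivAt (fun v => f v - v * f' 0 - v ^ 2 / 2 * f'' 0)
      (f' u - f' 0 - u * f'' 0) u := fun u hu => by
    have hsq : HasDerivAt (fun v => v ^ 2 / 2 * f'' 0) (u * f'' 0) u :=
      (((hasDerivAt_pow 2 u).div_const 2).mul_const (f'' 0)).congr_deriv (by norm_num)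
    exact ((hf u hu).sub (hasDerivAt_mul_const (f' 0))).sub hsq
  have hg' : ∀ u ∈ uIcc 0 s, |f' u - f' 0 - u * f'' 0| ≤ K * |s| ^ 2 := fun u hu => by
    have hsub : uIcc 0 u ⊆ uIcc 0 s := uIcc_subset_uIcc left_mem_uIcc hu
    refine (abs_taylor1_le hK0 (fun v hv => hf' v (hsub hv)) (fun v hv => hK v (hsub hv))).trans ?_
    have := abs_sub_left_of_mem_uIcc hu
    rw [sub_zero, sub_zero] at this
    gcongr
  have := abs_sub_le_of_hasDerivAt_uIcc hg hg'
  calc |f s - f 0 - s * f' 0 - s ^ 2 / 2 * f'' 0|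
      = |f s - s * f' 0 - s ^ 2 / 2 * f'' 0 - (f 0 - 0 * f' 0 - 0 ^ 2 / 2 * f'' 0)| := by ring_nf
    _ ≤ K * |s| ^ 2 * |s| := this
    _ = K * |s| ^ 3 := by ring

theorem taylor1_isBigO (hf : ∀ᶠ u in 𝓝 0, HasDerivAt f (f' u) u)
    (hf' : DifferentiableAt ℝ f' 0) :
    (fun s => f s - f 0 - s * f' 0) =O[𝓝 0] (fun s => s ^ 2) := by
  obtain ⟨K, hK0, hK⟩ := hf'.hasDerivAt.isBigO_sub.exists_nonneg
  refine IsBigO.of_bound K ?_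
  filter_upwards [eventually_forall_uIcc (hf.and hK.bound)] with s hs
  simpa using abs_taylor1_le hK0 (fun u hu => (hs u hu).1) fun u hu => by simpa using (hs u hu).2

theorem taylor2_isBigO (hf : ∀ᶠ u in 𝓝 0, HasDerivAt f (f' u) u)
    (hf' : ∀ᶠ u in 𝓝 0, HasDerivAt f' (f'' u) u) (hf'' : DifferentiableAt ℝ f'' 0) :
    (fun s => f s - f 0 - s * f' 0 - s ^ 2 / 2 * f'' 0) =O[𝓝 0] (fun s => s ^ 3) := by
  obtain ⟨K, hK0, hK⟩ := hf''.hasDerivAt.isBigO_sub.exists_nonneg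
  refine IsBigO.of_bound K ?_
  filter_upwards [eventually_forall_uIcc ((hf.and hf').and hK.bound)] with s hs
  simpa using abs_taylor2_le hK0 (fun u hu => (hs u hu).1.1) (fun u hu => (hs u hu).1.2)
    fun u hu => by simpa using (hs u hu).2

end Taylor

section Flow

variable {B : ℝ → ℝ}

theorem abs_flow_taylor2_le {y : ℝ → ℝ} {S : Set ℝ} {M s : ℝ} {L : ℝ≥0} (hM0 : 0 ≤ M)
    (hB : Differentiable ℝ B) (hBM : ∀ x ∈ S, |B x| ≤ M)
    (hL : LipschitzOnWith L (fun x => deriv B x * B x) S)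
    (hy : ∀ u ∈ uIcc 0 s, HasDerivAt y (B (y u)) u) (hyS : ∀ u ∈ uIcc 0 s, y u ∈ S) :
    |y s - y 0 - s * B (y 0) - s ^ 2 / 2 * (deriv B (y 0) * B (y 0))| ≤ L * M * |s| ^ 3 := by
  refine abs_taylor2_le (f' := fun u => B (y u)) (by positivity) hy
    (fun u hu => (hB (y u)).hasDerivAt.comp u (hy u hu)) fun u hu => ?_
  have hsub : uIcc 0 u ⊆ uIcc 0 s := uIcc_subset_uIcc left_mem_uIcc hu
  have hdist : |y u - y 0| ≤ M * |u| :=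
    abs_sub_le_of_hasDerivAt_uIcc (fun v hv => hy v (hsub hv)) fun v hv => hBM _ (hyS v (hsub hv))
  calc |deriv B (y u) * B (y u) - deriv B (y 0) * B (y 0)| ≤ L * |y u - y 0| := by
        simpa [Real.dist_eq] using hL.dist_le_mul _ (hyS u hu) _ (hyS 0 left_mem_uIcc)
    _ ≤ L * (M * |u|) := by gcongr
    _ = L * M * |u| := by ring

theorem flow_taylor2_isBigO (hB : ContDiff ℝ 2 B) {qB : ℝ → ℝ → ℝ} {x₀ : ℝ}
    (hqB : ∀ φ s, HasDerivAt (fun u => qB u φ) (B (qB s φ)) s) (hqB0 : ∀ φ, qB 0 φ = φ)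
    (hcont : ContinuousAt (fun p : ℝ × ℝ => qB p.1 p.2) (0, x₀)) :
    (fun p : ℝ × ℝ => qB p.1 p.2 - p.2 - p.1 * B p.2 - p.1 ^ 2 / 2 * (deriv B p.2 * B p.2))
      =O[𝓝 (0, x₀)] (fun p => p.1 ^ 3) := by
  set S := Metric.closedBall x₀ 1
  obtain ⟨M, hM⟩ := (isCompact_closedBall x₀ 1).exists_bound_of_continuousOn
    hB.continuous.continuousOn
  have hM0 : 0 ≤ M := (norm_nonneg _).trans (hM x₀ (Metric.mem_closedBall_self zero_le_one))
  have hF : ContDiff ℝ 1 (fun x => deriv B x * B x) :=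
    (hB.deriv' (n := 1)).mul (hB.of_le one_le_two)
  obtain ⟨L, hL⟩ := hF.contDiffOn.exists_lipschitzOnWith one_ne_zero (convex_closedBall x₀ 1)
    (isCompact_closedBall x₀ 1)
  have hS : ∀ᶠ p : ℝ × ℝ in 𝓝 (0, x₀), qB p.1 p.2 ∈ S :=
    hcont (by simpa [hqB0] using Metric.closedBall_mem_nhds x₀ one_pos)
  rw [nhds_prod_eq] at hS ⊢
  obtain ⟨pa, hpa, pb, hpb, hab⟩ := eventually_prod_iff.mp hS
  refine IsBigO.of_bound (L * M) ?_
  filter_upwards [(eventually_forall_uIcc hpa).prod_mk hpb] with p hp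
  have := abs_flow_taylor2_le hM0 (hB.differentiable two_ne_zero)
    (fun x hx => by simpa using hM x hx) hL (fun u _ => hqB p.2 u) fun u hu => hab (hp.1 u hu) hp.2
  simpa [hqB0] using this

end Flow

theorem splitting_step_taylor2_isBigO {A B qA : ℝ → ℝ} {qB : ℝ → ℝ → ℝ}
    (hA : Differentiable ℝ A) (hB : ContDiff ℝ 2 B) (hqA : ∀ s, HasDerivAt qA (A (qA s)) s)
    (hqB : ∀ φ s, HasDerivAt (fun u => qB u φ) (B (qB s φ)) s) (hqB0 : ∀ φ, qB 0 φ = φ)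
    (hcont : ContinuousAt (fun p : ℝ × ℝ => qB p.1 p.2) (0, qA 0)) :
    (fun τ => qB τ (qA τ) - qA τ - τ * B (qA 0) - τ ^ 2 * (deriv B (qA 0) * A (qA 0))
      - τ ^ 2 / 2 * (deriv B (qA 0) * B (qA 0))) =O[𝓝 0] (fun τ => τ ^ 3) := by
  have hBd : Differentiable ℝ B := hB.differentiable two_ne_zero
  have hB'd : Differentiable ℝ (deriv B) := (hB.deriv' (n := 1)).differentiable one_ne_zero
  have hqAc : Continuous qA := continuous_iff_continuousAt.2 fun s => (hqA s).continuousAt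
  have hflow := (flow_taylor2_isBigO hB hqB hqB0 hcont).comp_tendsto
    ((continuous_id.prodMk hqAc).tendsto 0)
  have hBqA := taylor1_isBigO (f := fun τ => B (qA τ))
    (.of_forall fun τ => (hBd _).hasDerivAt.comp τ (hqA τ))
    (((hB'd _).comp 0 (hqA 0).differentiableAt).mul ((hA _).comp 0 (hqA 0).differentiableAt))
  have hFqA := (((hB'd _).comp 0 (hqA 0).differentiableAt).mul
    ((hBd _).comp 0 (hqA 0).differentiableAt)).hasDerivAt.isBigO_sub
  have h2 := ((isBigO_refl (fun τ : ℝ => τ) _).mul hBqA).congr_right (g₂ := fun τ => τ ^ 3)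
    fun τ => by ring
  have h3 := (((isBigO_refl (fun τ : ℝ => τ ^ 2) _).mul hFqA).const_mul_left (1 / 2)).congr_right
    (g₂ := fun τ => τ ^ 3) fun τ => by ring
  refine ((hflow.add h2).add h3).congr_left fun τ => ?_
  simp only [Function.comp_apply, Pi.mul_apply, id]
  ring

theorem integral_comp_solution_taylor2_isBigO {V g z : ℝ → ℝ} (t : ℝ) (hV : Differentiable ℝ V)
    (hg : ContDiff ℝ 2 g) (hz : ∀ t, HasDerivAt z (V (z t)) t) :
    (fun τ => (∫ η in (0:ℝ)..τ, g (z (t + η))) - τ * g (z t)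
      - τ ^ 2 / 2 * (deriv g (z t) * V (z t))) =O[𝓝 0] (fun τ => τ ^ 3) := by
  have hgd : Differentiable ℝ g := hg.differentiable two_ne_zero
  have hg'd : Differentiable ℝ (deriv g) := (hg.deriv' (n := 1)).differentiable one_ne_zero
  have hzc : Continuous z := continuous_iff_continuousAt.2 fun t => (hz t).continuousAt
  have hshift : ∀ τ, HasDerivAt (fun η => z (t + η)) (V (z (t + τ))) τ :=
    fun τ => (hz (t + τ)).comp_const_add t τ
  simpa using taylor2_isBigO (f := fun τ => ∫ η in (0:ℝ)..τ, g (z (t + η)))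
    (.of_forall fun τ =>
      ((hgd.continuous.comp (hzc.comp (continuous_const_add t))).integral_hasStrictDerivAt
        0 τ).hasDerivAt)
    (.of_forall fun τ => (hgd _).hasDerivAt.comp τ (hshift τ))
    (((hg'd _).comp 0 (hshift 0).differentiableAt).mul ((hV _).comp 0 (hshift 0).differentiableAt))

theorem lte_B_sequential_splitting_general
    (A B q qA : ℝ → ℝ) (qB : ℝ → ℝ → ℝ) (tn : ℝ)
    (hA : ContDiff ℝ 2 A) (hB : ContDiff ℝ 2 B)
    (hq : ∀ t, HasDerivAt q (A (q t) + B (q t)) t)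
    (hqA : ∀ s, HasDerivAt qA (A (qA s)) s)
    (hqA0 : qA 0 = q tn)
    (hqB : ∀ φ s, HasDerivAt (fun u => qB u φ) (B (qB s φ)) s)
    (hqB0 : ∀ φ, qB 0 φ = φ)
    (hqBsmooth : ContDiffAt ℝ 2 (fun p : ℝ × ℝ => qB p.1 p.2) (0, q tn)) :
    (fun Δt : ℝ =>
        ((∫ η in (0:ℝ)..Δt, B (qB η (qA Δt))) - ∫ η in (0:ℝ)..Δt, B (q (tn + η)))
          - Δt ^ 2 / 2 * (deriv B (q tn) * A (q tn)))
      =O[nhds (0:ℝ)] (fun Δt : ℝ => Δt ^ 3) := by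
  have hAd : Differentiable ℝ A := hA.differentiable two_ne_zero
  have hstep := splitting_step_taylor2_isBigO hAd hB hqA hqB hqB0 (hqA0 ▸ hqBsmooth.continuousAt)
  have hexact := integral_comp_solution_taylor2_isBigO (V := fun x => A x + B x) tn
    (hAd.add (hB.differentiable two_ne_zero)) hB hq
  have hintegral_flow : ∀ τ, ∫ η in (0:ℝ)..τ, B (qB η (qA τ)) = qB τ (qA τ) - qA τ := fun τ => by
    have hqBc : Continuous fun η => qB η (qA τ) :=
      continuous_iff_continuousAt.2 fun η => (hqB (qA τ) η).continuousAt
    rw [intervalIntegral.integral_eq_sub_of_hasDerivAt (fun η _ => hqB (qA τ) η)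
      ((hB.continuous.comp hqBc).intervalIntegrable 0 τ), hqB0]
  refine (hstep.sub hexact).congr_left fun τ => ?_
  rw [hintegral_flow, hqA0]
  ring

theorem lte_B_sequential_splitting
    (A B q qA : ℝ → ℝ) (qB : ℝ → ℝ → ℝ) (tn : ℝ)
    (hA : ContDiff ℝ 2 A) (hB : ContDiff ℝ 2 B)
    (hq : ∀ t, HasDerivAt q (A (q t) + B (q t)) t)
    (hqA : ∀ s, HasDerivAt qA (A (qA s)) s)
    (hqA0 : qA 0 = q tn)
    (hqB : ∀ φ s, HasDerivAt (fun u => qB u φ) (B (qB s φ)) s)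
    (hqB0 : ∀ φ, qB 0 φ = φ)
    (hqAsmooth : ContDiffAt ℝ 2 qA 0)
    (hqBsmooth : ContDiffAt ℝ 2 (fun p : ℝ × ℝ => qB p.1 p.2) (0, q tn)) :
    (fun Δt : ℝ =>
        ((∫ η in (0:ℝ)..Δt, B (qB η (qA Δt))) - ∫ η in (0:ℝ)..Δt, B (q (tn + η)))
          - Δt ^ 2 / 2 * (deriv B (q tn) * A (q tn)))
      =O[nhds (0:ℝ)] (fun Δt : ℝ => Δt ^ 3) :=
  lte_B_sequential_splitting_general A B q qA qB tn hA hB hq hqA hqA0 hqB hqB0 hqBsmooth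
end

section
/- Let A, B, C : ℝ → ℝ be twice continuously differentiable, let tₙ ∈ ℝ, let q : ℝ → ℝ satisfy q′(t) = A(q(t)) + B(q(t)) + C(q(t)) for all t, and let q_A : ℝ → ℝ satisfy q_A′(s) = A(q_A(s)) with q_A(0) = q(tₙ), twice continuously differentiable near 0. Then the local truncation error attributable to process A in both the original and revised three-process coupling schemes, lte_A(Δt) = ∫₀^{Δt} A(q_A(η)) dη − ∫₀^{Δt} A(q(tₙ+η)) dη, satisfies lte_A(Δt) = (Δt²/2)·A′(q(tₙ))·(−B(q(tₙ)) − C(q(tₙ))) + O(Δt³) as Δt → 0. -/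
/-!
Both integrands start at `A (q tₙ)`, and the difference `g η = A (q_A η) - A (q (tₙ + η))` has
derivative `A'(q_A η) A(q_A η) - A'(q (tₙ + η)) (A + B + C)(q (tₙ + η))`, whose value at `0` is
`c = A'(q tₙ) (-B (q tₙ) - C (q tₙ))`. Since this derivative is itself differentiable at `0`,
two applications of the mean value inequality give `g η - η c = O(η²)` and then
`∫₀^Δt g - Δt² c / 2 = O(Δt³)`.
-/

open Filter Asymptotics Topology Set

theorem isBigO_pow_succ_of_hasDerivAt_s9 {E : Type*} [NormedAddCommGroup E] [NormedSpace ℝ E]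
    {f f' : ℝ → E} {n : ℕ} (hf : ∀ᶠ s in 𝓝 0, HasDerivAt f (f' s) s) (hf0 : f 0 = 0)
    (hf' : f' =O[𝓝 0] fun s => s ^ n) :
    f =O[𝓝 0] fun s => s ^ (n + 1) := by
  obtain ⟨K, hK, hKf'⟩ := hf'.exists_pos
  obtain ⟨ε, hε, hball⟩ := Metric.eventually_nhds_iff_ball.1 (hf.and hKf'.bound)
  refine IsBigO.of_bound K (Metric.eventually_nhds_iff_ball.2 ⟨ε, hε, fun s hs => ?_⟩)
  have hle : ∀ x ∈ uIcc 0 s, |x| ≤ |s| := fun x hx => by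
    simpa using abs_sub_left_of_mem_uIcc hx
  have hsub : uIcc 0 s ⊆ Metric.ball 0 ε := fun x hx => by
    rw [mem_ball_zero_iff, Real.norm_eq_abs] at hs ⊢
    exact (hle x hx).trans_lt hs
  have hbound : ∀ x ∈ uIcc 0 s, ‖f' x‖ ≤ K * |s| ^ n := fun x hx => by
    refine (hball x (hsub hx)).2.trans ?_
    rw [norm_pow, Real.norm_eq_abs]
    exact mul_le_mul_of_nonneg_left (pow_le_pow_left₀ (abs_nonneg x) (hle x hx) n) hK.le
  have hmvt := (convex_uIcc 0 s).norm_image_sub_le_of_norm_hasDerivWithin_le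
    (fun x hx => (hball x (hsub hx)).1.hasDerivWithinAt) hbound left_mem_uIcc right_mem_uIcc
  rw [hf0, sub_zero, sub_zero, Real.norm_eq_abs] at hmvt
  simpa [pow_succ, mul_assoc] using hmvt

theorem isBigO_integral_sub_sq_div_two_smul {E : Type*} [NormedAddCommGroup E]
    [NormedSpace ℝ E] [CompleteSpace E] {g g' : ℝ → E} (hg : ∀ s, HasDerivAt g (g' s) s)
    (hg0 : g 0 = 0) (hg' : DifferentiableAt ℝ g' 0) :
    (fun Δt : ℝ => (∫ η in (0:ℝ)..Δt, g η) - (Δt ^ 2 / 2) • g' 0) =O[𝓝 0] fun Δt => Δt ^ 3 := by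
  have hlin : (fun η : ℝ => g η - η • g' 0) =O[𝓝 0] fun η => η ^ 2 :=
    isBigO_pow_succ_of_hasDerivAt_s9 (n := 1) (f' := fun η => g' η - g' 0)
      (.of_forall fun η => (hg η).sub (((hasDerivAt_id' η).smul_const (g' 0)).congr_deriv
        (one_smul ℝ _)))
      (by simp [hg0]) (by simpa using hg'.isBigO_sub)
  refine isBigO_pow_succ_of_hasDerivAt_s9 (n := 2) (.of_forall fun Δt => ?_) (by simp) hlin
  have hgc : Continuous g := continuous_iff_continuousAt.2 fun s => (hg s).continuousAt
  convert (hgc.integral_hasStrictDerivAt 0 Δt).hasDerivAt.sub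
    (((hasDerivAt_pow 2 Δt).div_const 2).smul_const (g' 0)) using 3
  · rfl
  · norm_num

theorem differentiable_deriv_comp_mul_of_hasDerivAt {A F y : ℝ → ℝ} (hA : ContDiff ℝ 2 A)
    (hF : Differentiable ℝ F) (hy : ∀ s, HasDerivAt y (F (y s)) s) :
    Differentiable ℝ fun s => deriv A (y s) * F (y s) :=
  have hy' : Differentiable ℝ y := fun s => (hy s).differentiableAt
  (hA.differentiable_deriv_two.comp hy').mul (hF.comp hy')

theorem lte_A_three_process_general
    (A B C q qA : ℝ → ℝ) (tn : ℝ)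
    (hA : ContDiff ℝ 2 A) (hB : ContDiff ℝ 2 B) (hC : ContDiff ℝ 2 C)
    (hq : ∀ t, HasDerivAt q (A (q t) + B (q t) + C (q t)) t)
    (hqA : ∀ s, HasDerivAt qA (A (qA s)) s)
    (hqA0 : qA 0 = q tn) :
    (fun Δt : ℝ =>
        ((∫ η in (0:ℝ)..Δt, A (qA η)) - ∫ η in (0:ℝ)..Δt, A (q (tn + η)))
          - Δt ^ 2 / 2 * (deriv A (q tn) * (-B (q tn) - C (q tn))))
      =O[nhds (0:ℝ)] (fun Δt : ℝ => Δt ^ 3) := by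
  set F : ℝ → ℝ := fun x => A x + B x + C x
  have hA1 : Differentiable ℝ A := hA.differentiable two_ne_zero
  have hF : Differentiable ℝ F :=
    (hA1.add (hB.differentiable two_ne_zero)).add (hC.differentiable two_ne_zero)
  have hqshift : ∀ η, HasDerivAt (fun η => q (tn + η)) (F (q (tn + η))) η :=
    fun η => (hq (tn + η)).comp_const_add tn η
  have hlte := isBigO_integral_sub_sq_div_two_smul (g := fun η => A (qA η) - A (q (tn + η)))
    (fun η => ((hA1 _).hasDerivAt.comp η (hqA η)).sub ((hA1 _).hasDerivAt.comp η (hqshift η)))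
    (by simp [hqA0])
    (((differentiable_deriv_comp_mul_of_hasDerivAt hA hA1 hqA).sub
      (differentiable_deriv_comp_mul_of_hasDerivAt hA hF hqshift)) 0)
  have hintegrable : ∀ {y : ℝ → ℝ}, Differentiable ℝ y → ∀ Δt : ℝ,
      IntervalIntegrable (fun η => A (y η)) MeasureTheory.volume 0 Δt :=
    fun hy _ => (hA1.continuous.comp hy.continuous).intervalIntegrable _ _
  refine hlte.congr_left fun Δt => ?_
  rw [intervalIntegral.integral_sub (hintegrable (fun s => (hqA s).differentiableAt) Δt)
    (hintegrable (fun s => (hqshift s).differentiableAt) Δt), smul_eq_mul, add_zero, hqA0]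
  ring

theorem lte_A_three_process
    (A B C q qA : ℝ → ℝ) (tn : ℝ)
    (hA : ContDiff ℝ 2 A) (hB : ContDiff ℝ 2 B) (hC : ContDiff ℝ 2 C)
    (hq : ∀ t, HasDerivAt q (A (q t) + B (q t) + C (q t)) t)
    (hqA : ∀ s, HasDerivAt qA (A (qA s)) s)
    (hqA0 : qA 0 = q tn)
    (hqAsmooth : ContDiffAt ℝ 2 qA 0) :
    (fun Δt : ℝ =>
        ((∫ η in (0:ℝ)..Δt, A (qA η)) - ∫ η in (0:ℝ)..Δt, A (q (tn + η)))
          - Δt ^ 2 / 2 * (deriv A (q tn) * (-B (q tn) - C (q tn))))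
      =O[nhds (0:ℝ)] (fun Δt : ℝ => Δt ^ 3) :=
  lte_A_three_process_general A B C q qA tn hA hB hC hq hqA hqA0
end
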